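/- Let M be the free monoid on generators {αᵢ}_{i∈ℕ} ∪ {eⱼ}_{j∈ℕ}, M_α the submonoid generated by the α's, and K = ⋃_{j≥1} eⱼ M_α. For finitely supported functions pᵢ on M_α (i = 1, …, k), the left-convolution operator norm of Σᵢ δ_{eᵢ} * pᵢ on ℓ²(M) equals ‖Σᵢ pᵢ* * pᵢ‖^{1/2}, the square root of the operator norm of Σᵢ pᵢ* * pᵢ, where pᵢ*(x) = conj(pᵢ(x⁻¹))-analogue; equivalently, it equals sup{(Σᵢ ‖pᵢ * q‖₂²)^{1/2} : q finitely supported on M_α, ‖q‖₂ ≤ 1}. -/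

import Mathlib

/-- The free monoid on two countable families of generators `αᵢ` (left) and `eⱼ` (right). -/
abbrev MInf : Type := FreeMonoid (ℕ ⊕ ℕ)

/-- The ℓ² norm of a finitely supported function on the free monoid. -/
noncomputable def l2norm (p : MonoidAlgebra ℂ MInf) : ℝ :=
  Real.sqrt (∑ x ∈ p.coeff.support, ‖p.coeff x‖ ^ 2)

/-- A finitely supported function is supported on the submonoid `M_α` of words in the
`α` generators if every letter of every word of its support is an `α`. -/
def SupportedOnAlpha (p : MonoidAlgebra ℂ MInf) : Prop :=
  ∀ x ∈ p.coeff.support, ∀ l ∈ x.toList, l.isLeft = true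

/-!
Words beginning with distinct letters `eᵢ` are distinct, so the summands `δ_{eᵢ} * pᵢ * q` have
disjoint supports and `‖(Σᵢ δ_{eᵢ} * pᵢ) * q‖₂² = Σᵢ ‖pᵢ * q‖₂²` for every `q`; it remains to show
that restricting `q` to `M_α` does not lower the supremum. Every word factors uniquely as `a w`
with `a ∈ M_α` and `w` not beginning with an `α`. Grouping the words of `q` by `w` gives
`q = Σ_w q_w * δ_w` with each `q_w` supported on `M_α`; as the `pᵢ` are supported on `M_α` too,
the pieces `pᵢ * q_w * δ_w` again have disjoint supports, whence
`Σᵢ ‖pᵢ * q‖₂² = Σ_w Σᵢ ‖pᵢ * q_w‖₂² ≤ b² Σ_w ‖q_w‖₂² = b² ‖q‖₂²` for every upper bound `b` of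
the right-hand set (by homogeneity). So both sets have the same upper bounds; comparing upper
bounds also covers the case where both sets are unbounded and `sSup` takes the junk value `0`.
-/

open Finset

lemma Real.sSup_eq_of_upperBounds_eq {s t : Set ℝ} (hs : s.Nonempty) (ht : t.Nonempty)
    (h : upperBounds s = upperBounds t) : sSup s = sSup t := by
  by_cases hbdd : BddAbove s
  · exact (((isLUB_congr h).mp (isLUB_csSup hs hbdd)).csSup_eq ht).symm
  · rw [Real.sSup_of_not_bddAbove hbdd, Real.sSup_of_not_bddAbove (by rwa [BddAbove, ← h])]

namespace MonoidAlgebra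

variable {R G : Type*} [NormedRing R]

noncomputable def l2normSq (f : MonoidAlgebra R G) : ℝ :=
  ∑ x ∈ f.coeff.support, ‖f.coeff x‖ ^ 2

lemma l2normSq_nonneg (f : MonoidAlgebra R G) : 0 ≤ l2normSq f :=
  sum_nonneg fun _ _ => by positivity

lemma l2normSq_eq_sum_of_support_subset (f : MonoidAlgebra R G) {s : Finset G}
    (hs : f.coeff.support ⊆ s) : l2normSq f = ∑ x ∈ s, ‖f.coeff x‖ ^ 2 :=
  sum_subset hs fun x _ hx => by simp [Finsupp.notMem_support_iff.mp hx]

lemma l2normSq_pos {f : MonoidAlgebra R G} (hf : f ≠ 0) : 0 < l2normSq f := by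
  obtain ⟨x, hx⟩ := Finsupp.support_nonempty_iff.mpr (mt coeff_eq_zero.mp hf)
  exact sum_pos' (fun _ _ => by positivity) ⟨x, hx, by simpa [sq_pos_iff] using hx⟩

lemma l2normSq_smul [NormMulClass R] (c : R) (f : MonoidAlgebra R G) :
    l2normSq (c • f) = ‖c‖ ^ 2 * l2normSq f := by
  rw [l2normSq_eq_sum_of_support_subset (c • f) (s := f.coeff.support)
    (by rw [coeff_smul]; exact Finsupp.support_smul), l2normSq, mul_sum]
  simp [norm_mul, mul_pow]

lemma l2normSq_sum_of_pairwiseDisjoint {ι : Type*} (s : Finset ι) (f : ι → MonoidAlgebra R G)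
    (hf : (s : Set ι).PairwiseDisjoint fun i => (f i).coeff.support) :
    l2normSq (∑ i ∈ s, f i) = ∑ i ∈ s, l2normSq (f i) := by
  classical
  have hsupp : (∑ i ∈ s, f i).coeff.support ⊆ s.biUnion fun i => (f i).coeff.support := by
    rw [coeff_sum]; exact Finsupp.support_finsetSum
  rw [l2normSq_eq_sum_of_support_subset _ hsupp, sum_biUnion hf]
  refine sum_congr rfl fun i hi => sum_congr rfl fun x hx => ?_
  rw [coeff_sum, Finset.sum_apply', sum_eq_single i _ (absurd hi)]
  exact fun j hj hji => Finsupp.notMem_support_iff.mp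
    (disjoint_right.mp (hf hj hi hji) hx)

variable [Monoid G] [IsCancelMul G]

lemma l2normSq_single_one_mul (u : G) (f : MonoidAlgebra R G) :
    l2normSq (single u 1 * f) = l2normSq f := by
  simp [l2normSq, support_coeff_single_mul f 1 (by simp) u]

lemma l2normSq_mul_single_one (f : MonoidAlgebra R G) (u : G) :
    l2normSq (f * single u 1) = l2normSq f := by
  simp [l2normSq, support_coeff_mul_single f 1 (by simp) u]

lemma l2normSq_sum_single_of_mul {α ι : Type*} [Fintype ι] {g : ι → α}
    (hg : Function.Injective g) (r : ι → MonoidAlgebra R (FreeMonoid α)) :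
    l2normSq (∑ i, single (FreeMonoid.of (g i)) 1 * r i) = ∑ i, l2normSq (r i) := by
  rw [l2normSq_sum_of_pairwiseDisjoint]
  · simp only [l2normSq_single_one_mul]
  intro i _ j _ hij
  simp only [Function.onFun, support_coeff_single_mul _ 1 (by simp : ∀ y : R, 1 * y = 0 ↔ y = 0),
    disjoint_left, mem_map, mulLeftEmbedding_apply]
  rintro _ ⟨v, -, rfl⟩ ⟨w, -, h⟩
  exact hij (hg (by simpa using congrArg (List.head? ∘ FreeMonoid.toList) h.symm))

end MonoidAlgebra

open MonoidAlgebra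

lemma l2norm_eq_sqrt (p : MonoidAlgebra ℂ MInf) : l2norm p = √(l2normSq p) := rfl

lemma l2norm_sq (p : MonoidAlgebra ℂ MInf) : l2norm p ^ 2 = l2normSq p :=
  Real.sq_sqrt (l2normSq_nonneg p)

lemma l2norm_sum_single_inr_mul_mul {k : ℕ} (p : Fin k → MonoidAlgebra ℂ MInf)
    (q : MonoidAlgebra ℂ MInf) :
    l2norm ((∑ i : Fin k, single (FreeMonoid.of (Sum.inr (i : ℕ))) 1 * p i) * q) =
      √(∑ i, l2norm (p i * q) ^ 2) := by
  simp only [l2norm_sq]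
  rw [l2norm_eq_sqrt, sum_mul]
  simp only [mul_assoc]
  rw [l2normSq_sum_single_of_mul (g := fun i : Fin k => Sum.inr (i : ℕ))
    fun i j h => Fin.ext (Sum.inr_injective h)]

instance : DecidableEq MInf := inferInstanceAs (DecidableEq (List (ℕ ⊕ ℕ)))

def IsAlphaWord (x : MInf) : Prop := ∀ l ∈ x.toList, l.isLeft = true

def alphaPrefix (x : MInf) : MInf := FreeMonoid.ofList (x.toList.takeWhile Sum.isLeft)

def dropAlphaPrefix (x : MInf) : MInf := FreeMonoid.ofList (x.toList.dropWhile Sum.isLeft)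

lemma isAlphaWord_alphaPrefix (x : MInf) : IsAlphaWord (alphaPrefix x) := fun _ hl =>
  List.mem_takeWhile_imp (by simpa [alphaPrefix] using hl)

lemma alphaPrefix_mul_dropAlphaPrefix (x : MInf) : alphaPrefix x * dropAlphaPrefix x = x := by
  simp [alphaPrefix, dropAlphaPrefix, ← FreeMonoid.ofList_append]

lemma IsAlphaWord.mul {a b : MInf} (ha : IsAlphaWord a) (hb : IsAlphaWord b) :
    IsAlphaWord (a * b) := by
  intro l hl
  rw [FreeMonoid.toList_mul, List.mem_append] at hl
  exact hl.elim (ha l) (hb l)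

lemma IsAlphaWord.dropAlphaPrefix_mul {a : MInf} (ha : IsAlphaWord a) (x : MInf) :
    dropAlphaPrefix (a * x) = dropAlphaPrefix x := by
  rw [dropAlphaPrefix, FreeMonoid.toList_mul, List.dropWhile_append_of_pos ha, dropAlphaPrefix]

lemma dropAlphaPrefix_dropAlphaPrefix (x : MInf) :
    dropAlphaPrefix (dropAlphaPrefix x) = dropAlphaPrefix x := by
  simp [dropAlphaPrefix, List.dropWhile_idempotent]

lemma supportedOnAlpha_zero : SupportedOnAlpha 0 := by
  simp [SupportedOnAlpha]

lemma supportedOnAlpha_one : SupportedOnAlpha 1 := fun x hx => by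
  rw [Finset.eq_of_mem_singleton (support_coeff_one_subset hx)]
  simp

lemma SupportedOnAlpha.mul {r s : MonoidAlgebra ℂ MInf} (hr : SupportedOnAlpha r)
    (hs : SupportedOnAlpha s) : SupportedOnAlpha (r * s) := by
  intro x hx
  obtain ⟨u, hu, v, hv, rfl⟩ := mem_mul.mp (support_coeff_mul_subset r s hx)
  exact IsAlphaWord.mul (hr u hu) (hs v hv)

lemma SupportedOnAlpha.smul {f : MonoidAlgebra ℂ MInf} (hf : SupportedOnAlpha f) (c : ℂ) :
    SupportedOnAlpha (c • f) :=
  fun x hx => hf x (Finsupp.support_smul (by simpa only [coeff_smul] using hx))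

noncomputable def alphaComponent (q : MonoidAlgebra ℂ MInf) (w : MInf) : MonoidAlgebra ℂ MInf :=
  ∑ x ∈ q.coeff.support with dropAlphaPrefix x = w, single (alphaPrefix x) (q.coeff x)

lemma supportedOnAlpha_alphaComponent (q : MonoidAlgebra ℂ MInf) (w : MInf) :
    SupportedOnAlpha (alphaComponent q w) := by
  intro y hy
  rw [alphaComponent, coeff_sum] at hy
  obtain ⟨x, -, hyx⟩ := Finsupp.mem_support_finsetSum y hy
  rw [Finset.eq_of_mem_singleton (Finsupp.support_single_subset hyx)]
  exact isAlphaWord_alphaPrefix x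

lemma sum_alphaComponent_mul_single (q : MonoidAlgebra ℂ MInf) :
    ∑ w ∈ q.coeff.support.image dropAlphaPrefix, alphaComponent q w * single w 1 = q := by
  simp only [alphaComponent, sum_mul, single_mul_single, mul_one]
  calc _ = ∑ w ∈ q.coeff.support.image dropAlphaPrefix,
        ∑ x ∈ q.coeff.support with dropAlphaPrefix x = w, single x (q.coeff x) := by
        refine sum_congr rfl fun w _ => sum_congr rfl fun x hx => ?_
        rw [← (mem_filter.mp hx).2, alphaPrefix_mul_dropAlphaPrefix]
    _ = q := by
        rw [sum_fiberwise_of_maps_to fun x hx => mem_image_of_mem _ hx]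
        exact sum_coeff_single q

lemma l2normSq_sum_mul_single {W : Finset MInf} (hW : ∀ w ∈ W, dropAlphaPrefix w = w)
    {f : MInf → MonoidAlgebra ℂ MInf} (hf : ∀ w ∈ W, SupportedOnAlpha (f w)) :
    l2normSq (∑ w ∈ W, f w * single w 1) = ∑ w ∈ W, l2normSq (f w) := by
  rw [l2normSq_sum_of_pairwiseDisjoint]
  · simp only [l2normSq_mul_single_one]
  intro w hw w' hw' hww'
  simp only [Function.onFun, support_coeff_mul_single _ 1 (by simp : ∀ y : ℂ, y * 1 = 0 ↔ y = 0),
    disjoint_left, mem_map, mulRightEmbedding_apply]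
  rintro _ ⟨a, ha, rfl⟩ ⟨b, hb, h⟩
  refine hww' ?_
  rw [← hW w hw, ← hW w' hw', ← IsAlphaWord.dropAlphaPrefix_mul (hf w hw a ha) w,
    ← IsAlphaWord.dropAlphaPrefix_mul (hf w' hw' b hb) w', h]

lemma l2normSq_mul_eq_sum_alphaComponent {r : MonoidAlgebra ℂ MInf} (hr : SupportedOnAlpha r)
    (q : MonoidAlgebra ℂ MInf) :
    l2normSq (r * q) =
      ∑ w ∈ q.coeff.support.image dropAlphaPrefix, l2normSq (r * alphaComponent q w) := by
  conv_lhs => rw [← sum_alphaComponent_mul_single q, mul_sum]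
  simp_rw [← mul_assoc]
  refine l2normSq_sum_mul_single ?_ fun w _ => hr.mul (supportedOnAlpha_alphaComponent q w)
  simp [dropAlphaPrefix_dropAlphaPrefix]

lemma sum_l2normSq_mul_le_of_supportedOnAlpha {ι : Type*} [Fintype ι]
    {p : ι → MonoidAlgebra ℂ MInf} (hp : ∀ i, SupportedOnAlpha (p i)) {C : ℝ}
    (hC : ∀ f, SupportedOnAlpha f → ∑ i, l2normSq (p i * f) ≤ C * l2normSq f)
    (q : MonoidAlgebra ℂ MInf) : ∑ i, l2normSq (p i * q) ≤ C * l2normSq q := by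
  have hq := l2normSq_mul_eq_sum_alphaComponent supportedOnAlpha_one q
  simp only [one_mul] at hq
  calc ∑ i, l2normSq (p i * q)
      = ∑ w ∈ q.coeff.support.image dropAlphaPrefix,
          ∑ i, l2normSq (p i * alphaComponent q w) := by
        rw [sum_comm]
        exact sum_congr rfl fun i _ => l2normSq_mul_eq_sum_alphaComponent (hp i) q
    _ ≤ ∑ w ∈ q.coeff.support.image dropAlphaPrefix, C * l2normSq (alphaComponent q w) :=
        sum_le_sum fun w _ => hC _ (supportedOnAlpha_alphaComponent q w)
    _ = C * l2normSq q := by rw [← mul_sum, hq]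

lemma sum_l2normSq_mul_le_of_forall_l2norm_le_one {ι : Type*} [Fintype ι]
    {p : ι → MonoidAlgebra ℂ MInf} {b : ℝ}
    (hb : ∀ g, SupportedOnAlpha g → l2norm g ≤ 1 → √(∑ i, l2norm (p i * g) ^ 2) ≤ b)
    {f : MonoidAlgebra ℂ MInf} (hf : SupportedOnAlpha f) :
    ∑ i, l2normSq (p i * f) ≤ b ^ 2 * l2normSq f := by
  rcases eq_or_ne f 0 with rfl | hf0
  · simp [l2normSq]
  have hc : 0 < l2normSq f := l2normSq_pos hf0
  set s : ℂ := (((√(l2normSq f))⁻¹ : ℝ) : ℂ)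
  have hs : ‖s‖ ^ 2 = (l2normSq f)⁻¹ := by
    rw [Complex.norm_real, Real.norm_eq_abs, sq_abs, inv_pow, Real.sq_sqrt hc.le]
  have hunit : l2norm (s • f) ≤ 1 := by
    rw [l2norm_eq_sqrt, l2normSq_smul, hs, inv_mul_cancel₀ hc.ne', Real.sqrt_one]
  have hscaled := hb _ (hf.smul s) hunit
  simp only [l2norm_sq, mul_smul_comm, l2normSq_smul, hs, ← mul_sum] at hscaled
  rw [Real.sqrt_le_iff, inv_mul_le_iff₀ hc] at hscaled
  rw [mul_comm]
  exact hscaled.2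

/-- For `p₁, …, p_k` supported on `M_α`, the left-convolution operator norm of
`Σᵢ δ_{eᵢ} * pᵢ` on `ℓ²(M)` equals
`sup {(Σᵢ ‖pᵢ * q‖₂²)^{1/2} : q supported on M_α, ‖q‖₂ ≤ 1}`. -/
theorem column_norm_of_shifted_sum {k : ℕ} (p : Fin k → MonoidAlgebra ℂ MInf)
    (hp : ∀ i, SupportedOnAlpha (p i)) :
    sSup {t : ℝ | ∃ q : MonoidAlgebra ℂ MInf, l2norm q ≤ 1 ∧
        t = l2norm ((∑ i : Fin k,
          MonoidAlgebra.single (FreeMonoid.of (Sum.inr (i : ℕ))) 1 * p i) * q)}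
      = sSup {t : ℝ | ∃ q : MonoidAlgebra ℂ MInf, SupportedOnAlpha q ∧ l2norm q ≤ 1 ∧
          t = Real.sqrt (∑ i : Fin k, (l2norm (p i * q)) ^ 2)} := by
  refine Real.sSup_eq_of_upperBounds_eq ⟨_, 0, by simp [l2norm], rfl⟩
    ⟨_, 0, supportedOnAlpha_zero, by simp [l2norm], rfl⟩ (subset_antisymm ?_ ?_)
  · refine upperBounds_mono_set fun _ ⟨q, _, hq, ht⟩ => ⟨q, hq, ?_⟩
    rw [ht, l2norm_sum_single_inr_mul_mul]
  rintro b hb _ ⟨q, hq, rfl⟩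
  have hb' : ∀ g, SupportedOnAlpha g → l2norm g ≤ 1 → √(∑ i, l2norm (p i * g) ^ 2) ≤ b :=
    fun g hg hg1 => hb ⟨g, hg, hg1, rfl⟩
  have hb0 : 0 ≤ b := (Real.sqrt_nonneg _).trans (hb' 0 supportedOnAlpha_zero (by simp [l2norm]))
  have hbound : ∑ i, l2normSq (p i * q) ≤ b ^ 2 * l2normSq q :=
    sum_l2normSq_mul_le_of_supportedOnAlpha hp
      (fun f hf => sum_l2normSq_mul_le_of_forall_l2norm_le_one hb' hf) q
  have hq' : l2normSq q ≤ 1 := l2norm_sq q ▸ pow_le_one₀ (Real.sqrt_nonneg _) hq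
  rw [l2norm_sum_single_inr_mul_mul, Real.sqrt_le_iff]
  simp only [l2norm_sq]
  exact ⟨hb0, hbound.trans (mul_le_of_le_one_right (sq_nonneg b) hq')⟩
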